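/- arXiv:2604.02231 — 3 statements merged into one kernel-verified Lean document; each statement's English description precedes it below -/
import Mathlib

section
/- If for every Q ∈ R^{[m,n]} the solution set SOL(M,Q) of the tensor linear complementarity problem is convex, then M is T-column sufficient. -/
open Finset

/-- The contraction product: `(tmul M Z) i = ∑ j, M i j * Z j`. -/
def tmul {m n : ℕ} (M : (Fin m → Fin n) → (Fin m → Fin n) → ℝ)
    (Z : (Fin m → Fin n) → ℝ) : (Fin m → Fin n) → ℝ :=
  fun i => ∑ j : Fin m → Fin n, M i j * Z j

/-- Inner product of tensors. -/
def tinner {m n : ℕ} (A B : (Fin m → Fin n) → ℝ) : ℝ :=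
  ∑ i : Fin m → Fin n, A i * B i

/-- `M` is T-column sufficient. -/
def TColSuff {m n : ℕ} (M : (Fin m → Fin n) → (Fin m → Fin n) → ℝ) : Prop :=
  ∀ Z : (Fin m → Fin n) → ℝ,
    (∀ i, Z i * tmul M Z i ≤ 0) → (∀ i, Z i * tmul M Z i = 0)

/-- `M` is T-column sufficient on the nonnegative orthant. -/
def TColSuffPlus {m n : ℕ} (M : (Fin m → Fin n) → (Fin m → Fin n) → ℝ) : Prop :=
  ∀ Z : (Fin m → Fin n) → ℝ, (∀ i, 0 ≤ Z i) →
    (∀ i, Z i * tmul M Z i ≤ 0) → (∀ i, Z i * tmul M Z i = 0)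

/-- `M` is a T-P tensor. -/
def TP {m n : ℕ} (M : (Fin m → Fin n) → (Fin m → Fin n) → ℝ) : Prop :=
  ∀ Z : (Fin m → Fin n) → ℝ, Z ≠ 0 → ∃ i, 0 < Z i * tmul M Z i

/-- `M` is T-non-degenerate. -/
def TND {m n : ℕ} (M : (Fin m → Fin n) → (Fin m → Fin n) → ℝ) : Prop :=
  ∀ Z : (Fin m → Fin n) → ℝ, Z ≠ 0 → ∃ i, Z i * tmul M Z i ≠ 0

/-- `M` is T-positive semidefinite. -/
def TPSD {m n : ℕ} (M : (Fin m → Fin n) → (Fin m → Fin n) → ℝ) : Prop :=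
  ∀ Z : (Fin m → Fin n) → ℝ, 0 ≤ tinner Z (tmul M Z)

/-- `M` is T-copositive. -/
def TCopositive {m n : ℕ} (M : (Fin m → Fin n) → (Fin m → Fin n) → ℝ) : Prop :=
  ∀ Z : (Fin m → Fin n) → ℝ, (∀ i, 0 ≤ Z i) → 0 ≤ tinner Z (tmul M Z)

/-- `M` is T-semi-positive. -/
def TSemiPos {m n : ℕ} (M : (Fin m → Fin n) → (Fin m → Fin n) → ℝ) : Prop :=
  ∀ Z : (Fin m → Fin n) → ℝ, (∀ i, 0 ≤ Z i) → Z ≠ 0 →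
    ∃ i, 0 < Z i ∧ 0 ≤ tmul M Z i

/-- The solution set of the TLCP. -/
def SOL {m n : ℕ} (M : (Fin m → Fin n) → (Fin m → Fin n) → ℝ)
    (Q : (Fin m → Fin n) → ℝ) : Set ((Fin m → Fin n) → ℝ) :=
  {Z | (∀ i, 0 ≤ Z i) ∧ (∀ i, 0 ≤ tmul M Z i + Q i) ∧
    tinner Z (fun i => tmul M Z i + Q i) = 0}

/-! If `z_i (MZ)_i ≤ 0` for all `i`, then `Z⁺` and `Z⁻` both solve the TLCP with
`Q = (MZ)⁺ - MZ⁺ = (MZ)⁻ - MZ⁻`. Convexity of the solution set forces complementarity across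
solutions, so `z⁺_i (MZ)⁻_i = z⁻_i (MZ)⁺_i = 0` as well, and then
`z_i (MZ)_i = (z⁺_i - z⁻_i) ((MZ)⁺_i - (MZ)⁻_i) = 0`. -/

lemma posPart_mul_posPart_eq_zero {a b : ℝ} (h : a * b ≤ 0) : a⁺ * b⁺ = 0 := by
  rcases le_or_gt a 0 with ha | ha
  · rw [posPart_eq_zero.mpr ha, zero_mul]
  · rw [posPart_eq_zero.mpr (nonpos_of_mul_nonpos_right h ha), mul_zero]

section SOL

open Matrix

variable {m n : ℕ} {M : (Fin m → Fin n) → (Fin m → Fin n) → ℝ}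
  {Q Z X Y : (Fin m → Fin n) → ℝ}

lemma tmul_eq_mulVec : tmul M Z = of M *ᵥ Z := rfl

lemma tmul_posPart_sub_tmul_negPart : tmul M Z⁺ - tmul M Z⁻ = tmul M Z := by
  rw [tmul_eq_mulVec, tmul_eq_mulVec, ← mulVec_sub, posPart_sub_negPart, tmul_eq_mulVec]

lemma mem_SOL_iff :
    Z ∈ SOL M Q ↔ 0 ≤ Z ∧ 0 ≤ tmul M Z + Q ∧ ∀ i, Z i * (tmul M Z + Q) i = 0 := by
  refine and_congr_right fun hZ => and_congr_right fun hW => ?_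
  exact Finset.sum_eq_zero_iff_of_nonneg (fun i _ => mul_nonneg (hZ i) (hW i)) |>.trans
    (by simp only [Finset.mem_univ, true_implies, Pi.add_apply])

/-- Complementarity at the midpoint of `X` and `Y` expands into a sum of four nonnegative
products. -/
lemma mul_tmul_add_eq_zero_of_convex (hconv : Convex ℝ (SOL M Q)) (hX : X ∈ SOL M Q)
    (hY : Y ∈ SOL M Q) (i : Fin m → Fin n) : X i * (tmul M Y + Q) i = 0 := by
  obtain ⟨hX0, hXw, hXc⟩ := mem_SOL_iff.mp hX
  obtain ⟨hY0, hYw, hYc⟩ := mem_SOL_iff.mp hY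
  have hmid := hconv hX hY (by norm_num : (0 : ℝ) ≤ 1 / 2) (by norm_num : (0 : ℝ) ≤ 1 / 2)
    (by norm_num)
  have hmidc := (mem_SOL_iff.mp hmid).2.2 i
  simp only [tmul_eq_mulVec, mulVec_add, mulVec_smul, Pi.add_apply, Pi.smul_apply,
    smul_eq_mul] at hmidc hXc hYc ⊢
  nlinarith [hXc i, hYc i, mul_nonneg (hX0 i) (hYw i), mul_nonneg (hY0 i) (hXw i)]

lemma posPart_mem_SOL (hZ : ∀ i, Z i * tmul M Z i ≤ 0) :
    Z⁺ ∈ SOL M ((tmul M Z)⁺ - tmul M Z⁺) := by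
  refine mem_SOL_iff.mpr ⟨posPart_nonneg Z, ?_, fun i => ?_⟩ <;> rw [add_sub_cancel]
  · exact posPart_nonneg _
  · exact posPart_mul_posPart_eq_zero (hZ i)

lemma negPart_mem_SOL (hZ : ∀ i, Z i * tmul M Z i ≤ 0) :
    Z⁻ ∈ SOL M ((tmul M Z)⁺ - tmul M Z⁺) := by
  -- `-Z` satisfies the hypothesis too and gives the same `Q`: `(MZ)⁺ - (MZ)⁻ = MZ⁺ - MZ⁻`.
  have hnegZ : ∀ i, (-Z) i * tmul M (-Z) i ≤ 0 := fun i => by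
    simpa only [tmul_eq_mulVec, mulVec_neg, Pi.neg_apply, neg_mul_neg] using hZ i
  have hQ : (tmul M (-Z))⁺ - tmul M (-Z)⁺ = (tmul M Z)⁺ - tmul M Z⁺ := by
    rw [show tmul M (-Z) = -tmul M Z from mulVec_neg _ _, posPart_neg (tmul M Z), posPart_neg Z]
    linear_combination
      tmul_posPart_sub_tmul_negPart (M := M) (Z := Z) - posPart_sub_negPart (tmul M Z)
  rw [← hQ]
  simpa only [posPart_neg] using posPart_mem_SOL hnegZ

end SOL

theorem stmt6 {m n : ℕ} (M : (Fin m → Fin n) → (Fin m → Fin n) → ℝ)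
    (h : ∀ Q : (Fin m → Fin n) → ℝ, Convex ℝ (SOL M Q)) : TColSuff M := by
  intro Z hZ i
  set Q := (tmul M Z)⁺ - tmul M Z⁺
  have hpos : Z⁺ ∈ SOL M Q := posPart_mem_SOL hZ
  have hneg : Z⁻ ∈ SOL M Q := negPart_mem_SOL hZ
  have hsplit : tmul M Z = (tmul M Z⁺ + Q) - (tmul M Z⁻ + Q) := by
    rw [add_sub_add_right_eq_sub, tmul_posPart_sub_tmul_negPart]
  have hcross {X Y} (hX : X ∈ SOL M Q) (hY : Y ∈ SOL M Q) :=
    mul_tmul_add_eq_zero_of_convex (h Q) hX hY i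
  rw [congrFun hsplit i, ← congrFun (posPart_sub_negPart Z) i, Pi.sub_apply, Pi.sub_apply]
  linear_combination hcross hpos hpos - hcross hpos hneg - hcross hneg hpos + hcross hneg hneg
end

section
/- A tensor M ∈ R^{[2m,n]} is T-semi-positive if and only if for every entrywise positive Q ∈ R^{[m,n]} the tensor linear complementarity problem TLCP(M,Q) has a unique solution. -/
open Finset

/-! For `Q > 0` the zero tensor always solves `TLCP(M,Q)`. At a solution `Z`, complementarity gives
`(MZ)_i = -q_i < 0` wherever `z_i > 0`; a nonzero such `Z` is exactly a witness against
T-semi-positivity. Conversely every such witness solves `TLCP(M,Q)` for a suitable positive `Q`,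
so uniqueness fails. -/

section

variable {m n : ℕ} (M : (Fin m → Fin n) → (Fin m → Fin n) → ℝ)

theorem tinner_eq_zero_iff_of_nonneg {A B : (Fin m → Fin n) → ℝ} (hA : ∀ i, 0 ≤ A i)
    (hB : ∀ i, 0 ≤ B i) : tinner A B = 0 ↔ ∀ i, A i * B i = 0 := by
  simpa [tinner] using sum_eq_zero_iff_of_nonneg (s := univ) fun i _ => mul_nonneg (hA i) (hB i)

theorem zero_mem_SOL {Q : (Fin m → Fin n) → ℝ} (hQ : ∀ i, 0 ≤ Q i) : 0 ∈ SOL M Q :=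
  ⟨fun _ => le_rfl, fun i => by simpa [tmul] using hQ i, by simp [tinner]⟩

theorem tmul_neg_of_mem_SOL {Q Z : (Fin m → Fin n) → ℝ} (hQ : ∀ i, 0 < Q i)
    (hZ : Z ∈ SOL M Q) {i : Fin m → Fin n} (hi : 0 < Z i) : tmul M Z i < 0 := by
  obtain ⟨hZnn, hw, hcompl⟩ := hZ
  have hw0 : tmul M Z i + Q i = 0 :=
    (mul_eq_zero.1 ((tinner_eq_zero_iff_of_nonneg hZnn hw).1 hcompl i)).resolve_left hi.ne'
  linarith [hQ i]

theorem TSemiPos.eq_zero_of_mem_SOL {M} (hM : TSemiPos M) {Q Z : (Fin m → Fin n) → ℝ}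
    (hQ : ∀ i, 0 < Q i) (hZ : Z ∈ SOL M Q) : Z = 0 := by
  by_contra hZ0
  obtain ⟨i, hi, hMZi⟩ := hM Z hZ.1 hZ0
  exact (tmul_neg_of_mem_SOL M hQ hZ hi).not_ge hMZi

theorem exists_pos_mem_SOL_of_tmul_neg {Z : (Fin m → Fin n) → ℝ} (hZ : ∀ i, 0 ≤ Z i)
    (hMZ : ∀ i, 0 < Z i → tmul M Z i < 0) : ∃ Q, (∀ i, 0 < Q i) ∧ Z ∈ SOL M Q := by
  set Q : (Fin m → Fin n) → ℝ := fun i => if 0 < Z i then -tmul M Z i else max 1 (-tmul M Z i)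
  have hQ_pos : ∀ i, 0 < Q i := by
    intro i
    by_cases hi : 0 < Z i
    · simpa [Q, hi] using hMZ i hi
    · simp [Q, hi]
  have hw : ∀ i, 0 ≤ tmul M Z i + Q i := by
    intro i
    by_cases hi : 0 < Z i
    · simp [Q, hi]
    · simp only [Q, hi, if_false]
      linarith [le_max_right 1 (-tmul M Z i)]
  have hcompl : ∀ i, Z i * (tmul M Z i + Q i) = 0 := by
    intro i
    by_cases hi : 0 < Z i
    · simp [Q, hi]
    · simp [le_antisymm (not_lt.1 hi) (hZ i)]
  exact ⟨Q, hQ_pos, hZ, hw, (tinner_eq_zero_iff_of_nonneg hZ hw).2 hcompl⟩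

end

theorem stmt11 {m n : ℕ} (M : (Fin m → Fin n) → (Fin m → Fin n) → ℝ) :
    TSemiPos M ↔
      ∀ Q : (Fin m → Fin n) → ℝ, (∀ i, 0 < Q i) → ∃! Z, Z ∈ SOL M Q := by
  constructor
  · intro hM Q hQ
    exact ⟨0, zero_mem_SOL M fun i => (hQ i).le, fun Z hZ => hM.eq_zero_of_mem_SOL hQ hZ⟩
  · intro huniq Z hZ hZ0
    by_contra! hMZ
    obtain ⟨Q, hQ, hZQ⟩ := exists_pos_mem_SOL_of_tmul_neg M hZ hMZ
    exact hZ0 ((huniq Q hQ).unique hZQ (zero_mem_SOL M fun i => (hQ i).le))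
end

section
/- Let M ∈ R^{[4,2]} have entries m_{1112} = −10, m_{1212} = m_{2122} = m_{2211} = 1, and all other entries zero. Then M is T-column sufficient on the nonnegative orthant R^{[2,2]}_+ but is not T-copositive. -/
open Finset

/-!
On the nonnegative orthant the condition at position (1,2) reads z₁₂² ≤ 0, so z₁₂ = 0; this kills the
product −10 z₁₁z₁₂, and the two remaining products z₂₁z₂₂ and z₂₂z₁₁ are nonnegative, hence zero.
Copositivity fails at the all-ones tensor, where the entry −10 outweighs the three entries 1.
In the code indices are 0-based: z₁₂ is `Z ![0, 1]`.
-/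

theorem sum_fin_two_arrow {α M : Type*} [Fintype α] [AddCommMonoid M] (g : (Fin 2 → α) → M) :
    ∑ j, g j = ∑ a, ∑ b, g ![a, b] := by
  rw [← (finTwoArrowEquiv α).symm.sum_comp, Fintype.sum_prod_type]
  rfl

theorem forall_fin_two_arrow {α : Type*} {P : (Fin 2 → α) → Prop} :
    (∀ j, P j) ↔ ∀ a b, P ![a, b] := by
  rw [← (finTwoArrowEquiv α).symm.forall_congr_right, Prod.forall]
  rfl

def exampleTensor : (Fin 2 → Fin 2) → (Fin 2 → Fin 2) → ℝ := fun i j =>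
  if i 0 = 0 ∧ i 1 = 0 ∧ j 0 = 0 ∧ j 1 = 1 then (-10 : ℝ)
  else if i 0 = 0 ∧ i 1 = 1 ∧ j 0 = 0 ∧ j 1 = 1 then 1
  else if i 0 = 1 ∧ i 1 = 0 ∧ j 0 = 1 ∧ j 1 = 1 then 1
  else if i 0 = 1 ∧ i 1 = 1 ∧ j 0 = 0 ∧ j 1 = 0 then 1
  else 0

theorem tmul_exampleTensor (Z : (Fin 2 → Fin 2) → ℝ) (a b : Fin 2) :
    tmul exampleTensor Z ![a, b] = ![![-10 * Z ![0, 1], Z ![0, 1]], ![Z ![1, 1], Z ![0, 0]]] a b := by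
  fin_cases a <;> fin_cases b <;> simp [tmul, sum_fin_two_arrow, exampleTensor]

theorem tColSuffPlus_exampleTensor : TColSuffPlus exampleTensor := by
  intro Z hZ hprod
  simp only [forall_fin_two_arrow, Fin.forall_fin_two, tmul_exampleTensor, Matrix.cons_val_zero,
    Matrix.cons_val_one] at hprod ⊢
  obtain ⟨⟨-, h12⟩, h21, h22⟩ := hprod
  have hz12 : Z ![0, 1] = 0 := mul_self_eq_zero.mp (le_antisymm h12 (mul_self_nonneg _))
  refine ⟨⟨by simp [hz12], by simp [hz12]⟩, ?_, ?_⟩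
  · exact le_antisymm h21 (mul_nonneg (hZ _) (hZ _))
  · exact le_antisymm h22 (mul_nonneg (hZ _) (hZ _))

theorem not_tCopositive_exampleTensor : ¬ TCopositive exampleTensor := fun h => by
  have hones := h 1 fun _ => zero_le_one
  norm_num [tinner, sum_fin_two_arrow, tmul_exampleTensor] at hones

theorem stmt18 (M : (Fin 2 → Fin 2) → (Fin 2 → Fin 2) → ℝ)
    (hM : ∀ i j : Fin 2 → Fin 2, M i j =
      if i 0 = 0 ∧ i 1 = 0 ∧ j 0 = 0 ∧ j 1 = 1 then (-10 : ℝ)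
      else if i 0 = 0 ∧ i 1 = 1 ∧ j 0 = 0 ∧ j 1 = 1 then 1
      else if i 0 = 1 ∧ i 1 = 0 ∧ j 0 = 1 ∧ j 1 = 1 then 1
      else if i 0 = 1 ∧ i 1 = 1 ∧ j 0 = 0 ∧ j 1 = 0 then 1
      else 0) :
    TColSuffPlus M ∧ ¬ TCopositive M := by
  obtain rfl : M = exampleTensor := funext₂ hM
  exact ⟨tColSuffPlus_exampleTensor, not_tCopositive_exampleTensor⟩
end
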